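/- arXiv:1406.0155 — 2 statements merged into one kernel-verified Lean document; each statement's English description precedes it below -/
import Mathlib

section
/- For any inconsistent finite knowledge base K, there exist μ_D(K) pairwise distinct minimal unsatisfiable subsets M₁, …, M_{μ_D(K)} of K such that {M₁, …, M_{μ_D(K)}} is itself a maximal partial MUS-decomposition of K. In other words, the maximum cardinality of a partial MUS-decomposition is attained by a partial MUS-decomposition all of whose components are single MUSes. -/
inductive PropForm (V : Type) : Type
  | var : V → PropForm V
  | neg : PropForm V → PropForm V
  | conj : PropForm V → PropForm V → PropForm V
  | disj : PropForm V → PropForm V → PropForm V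
  deriving DecidableEq

namespace PropForm
def eval {V : Type} (v : V → Bool) : PropForm V → Bool
  | var p => v p
  | neg f => !(eval v f)
  | conj f g => eval v f && eval v g
  | disj f g => eval v f || eval v g
end PropForm

/-- A finite knowledge base `K` is satisfiable (consistent) if some valuation makes
all its formulas true. -/
def Sat {V : Type} (K : Finset (PropForm V)) : Prop :=
  ∃ v : V → Bool, ∀ f ∈ K, f.eval v = true

/-- `M` is a minimal unsatisfiable set: inconsistent, with every proper subset consistent. -/
def IsMUS {V : Type} (M : Finset (PropForm V)) : Prop :=
  ¬ Sat M ∧ ∀ M' ⊂ M, Sat M'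

/-- The set of minimal unsatisfiable subsets of `K`. -/
def MUSes {V : Type} (K : Finset (PropForm V)) : Set (Finset (PropForm V)) :=
  {M | M ⊆ K ∧ IsMUS M}

/-- A partial MUS-decomposition of `K`: a family of pairwise-disjoint inconsistent
subsets of `K` such that the MUSes of their union are exactly the disjoint union of
the MUSes of the components. -/
def IsPartialMUSdecomp {V : Type} [DecidableEq V] (K : Finset (PropForm V))
    (T : Finset (Finset (PropForm V))) : Prop :=
  (∀ Ki ∈ T, Ki ⊆ K ∧ ¬ Sat Ki) ∧
  (↑T : Set (Finset (PropForm V))).PairwiseDisjoint id ∧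
  MUSes (T.sup id) = ⋃ Ki ∈ T, MUSes Ki ∧
  (↑T : Set (Finset (PropForm V))).Pairwise fun A B => Disjoint (MUSes A) (MUSes B)

/-- The distribution index: maximal cardinality of a partial MUS-decomposition. -/
noncomputable def muD {V : Type} [DecidableEq V] (K : Finset (PropForm V)) : ℕ :=
  sSup {n : ℕ | ∃ T : Finset (Finset (PropForm V)), IsPartialMUSdecomp K T ∧ T.card = n}

/-! Take a partial MUS-decomposition of maximal cardinality and replace each component by one of
its MUSes. Every MUS of the union of the new components is a MUS of the union of the old ones, so
it lies in a single old component, and disjointness forces it inside the MUS chosen there; hence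
the new family is again a partial MUS-decomposition, of the same cardinality. -/

variable {V : Type}

lemma sat_empty : Sat (∅ : Finset (PropForm V)) :=
  ⟨fun _ => true, by simp⟩

lemma nonempty_of_not_sat {S : Finset (PropForm V)} (h : ¬ Sat S) : S.Nonempty :=
  Finset.nonempty_iff_ne_empty.mpr fun hS => h (hS ▸ sat_empty)

lemma exists_isMUS_subset {S : Finset (PropForm V)} (h : ¬ Sat S) : ∃ M ⊆ S, IsMUS M := by
  induction S using Finset.strongInduction with
  | H S ih =>
    by_cases hmin : ∃ S' ⊂ S, ¬ Sat S'
    · obtain ⟨S', hS'S, hS'⟩ := hmin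
      obtain ⟨M, hMS', hM⟩ := ih S' hS'S hS'
      exact ⟨M, hMS'.trans hS'S.subset, hM⟩
    · exact ⟨S, subset_rfl, h, fun S' hS'S => not_not.mp fun hS' => hmin ⟨S', hS'S, hS'⟩⟩

lemma MUSes_empty : MUSes (∅ : Finset (PropForm V)) = ∅ :=
  Set.eq_empty_of_forall_notMem fun _ ⟨hM, hmus⟩ =>
    hmus.1 (Finset.subset_empty.mp hM ▸ sat_empty)

lemma disjoint_MUSes {A B : Finset (PropForm V)} (h : Disjoint A B) :
    Disjoint (MUSes A) (MUSes B) :=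
  Set.disjoint_left.mpr fun _ ⟨hMA, hM⟩ ⟨hMB, _⟩ =>
    (nonempty_of_not_sat hM.1).ne_empty ((Finset.disjoint_self_iff_empty _).mp (h.mono hMA hMB))

section Decomposition

variable [DecidableEq V] {K : Finset (PropForm V)} {T : Finset (Finset (PropForm V))}

lemma isPartialMUSdecomp_empty (K : Finset (PropForm V)) : IsPartialMUSdecomp K ∅ := by
  refine ⟨by simp, by simp, ?_, by simp⟩
  simp [MUSes_empty]

lemma IsPartialMUSdecomp.card_le (hT : IsPartialMUSdecomp K T) : T.card ≤ 2 ^ K.card :=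
  Finset.card_powerset K ▸ Finset.card_le_card fun B hB => Finset.mem_powerset.mpr (hT.1 B hB).1

lemma exists_isPartialMUSdecomp_card_eq_muD (K : Finset (PropForm V)) :
    ∃ T, IsPartialMUSdecomp K T ∧ T.card = muD K := by
  have hbdd : BddAbove {n | ∃ T, IsPartialMUSdecomp K T ∧ T.card = n} :=
    ⟨2 ^ K.card, by rintro n ⟨T, hT, rfl⟩; exact hT.card_le⟩
  exact Nat.sSup_mem (s := {n | ∃ T, IsPartialMUSdecomp K T ∧ T.card = n})
    ⟨0, ∅, isPartialMUSdecomp_empty K, rfl⟩ hbdd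

variable {f : Finset (PropForm V) → Finset (PropForm V)}

lemma IsPartialMUSdecomp.MUSes_sup_image (hT : IsPartialMUSdecomp K T) (hf : ∀ B ∈ T, f B ⊆ B) :
    MUSes ((T.image f).sup id) = ⋃ A ∈ T.image f, MUSes A := by
  obtain ⟨-, hdisj, hMUSes, -⟩ := hT
  rw [Finset.sup_image, Function.id_comp]
  ext N
  simp only [Set.mem_iUnion, Finset.mem_image, exists_prop]
  constructor
  · rintro ⟨hN, hmus⟩
    have hN_old : N ∈ ⋃ B ∈ T, MUSes B :=
      hMUSes ▸ ⟨hN.trans (Finset.sup_mono_fun hf), hmus⟩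
    simp only [Set.mem_iUnion, exists_prop] at hN_old
    obtain ⟨B, hB, hNB, -⟩ := hN_old
    have hNf : N ⊆ f B := fun x hx => by
      obtain ⟨C, hC, hxC⟩ := Finset.mem_sup.mp (hN hx)
      obtain rfl : C = B := by_contra fun hCB =>
        Finset.disjoint_left.mp (hdisj hC hB hCB) (hf C hC hxC) (hNB hx)
      exact hxC
    exact ⟨f B, ⟨B, hB, rfl⟩, hNf, hmus⟩
  · rintro ⟨_, ⟨B, hB, rfl⟩, hNB, hmus⟩
    exact ⟨hNB.trans (Finset.le_sup (f := f) hB), hmus⟩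

lemma IsPartialMUSdecomp.image_of_subset (hT : IsPartialMUSdecomp K T)
    (hf : ∀ B ∈ T, f B ⊆ B ∧ ¬ Sat (f B)) :
    IsPartialMUSdecomp K (T.image f) ∧ (T.image f).card = T.card := by
  have hdisj_f : (↑T : Set (Finset (PropForm V))).Pairwise fun B C => Disjoint (f B) (f C) :=
    fun B hB C hC hBC => (hT.2.1 hB hC hBC).mono (hf B hB).1 (hf C hC).1
  have hdisj : (↑(T.image f) : Set (Finset (PropForm V))).PairwiseDisjoint id := by
    rw [Finset.coe_image]
    exact hdisj_f.image
  have hinj : Set.InjOn f T := fun B hB C hC hBC => by_contra fun hne => by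
    have hdisjBC : Disjoint (f B) (f C) := hdisj_f hB hC hne
    rw [hBC, Finset.disjoint_self_iff_empty] at hdisjBC
    exact (nonempty_of_not_sat (hf C hC).2).ne_empty hdisjBC
  refine ⟨⟨Finset.forall_mem_image.mpr fun B hB => ⟨(hf B hB).1.trans (hT.1 B hB).1, (hf B hB).2⟩,
    hdisj, hT.MUSes_sup_image fun B hB => (hf B hB).1,
    fun _ hA _ hB hAB => disjoint_MUSes (hdisj hA hB hAB)⟩, Finset.card_image_of_injOn hinj⟩

end Decomposition

theorem stmt10_general {V : Type} [DecidableEq V] (K : Finset (PropForm V)) :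
    ∃ T : Finset (Finset (PropForm V)),
      IsPartialMUSdecomp K T ∧ T.card = muD K ∧ ∀ M ∈ T, M ∈ MUSes K := by
  obtain ⟨T, hT, hcard⟩ := exists_isPartialMUSdecomp_card_eq_muD K
  choose! f hf using fun B (hB : ¬ Sat B) => exists_isMUS_subset hB
  have hfT : ∀ B ∈ T, f B ⊆ B ∧ IsMUS (f B) := fun B hB => hf B (hT.1 B hB).2
  obtain ⟨hT', hcard'⟩ := hT.image_of_subset fun B hB => ⟨(hfT B hB).1, (hfT B hB).2.1⟩
  refine ⟨T.image f, hT', hcard'.trans hcard, ?_⟩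
  exact Finset.forall_mem_image.mpr fun B hB => ⟨(hfT B hB).1.trans (hT.1 B hB).1, (hfT B hB).2⟩

theorem stmt10 {V : Type} [DecidableEq V] (K : Finset (PropForm V)) (h : ¬ Sat K) :
    ∃ T : Finset (Finset (PropForm V)),
      IsPartialMUSdecomp K T ∧ T.card = muD K ∧ ∀ M ∈ T, M ∈ MUSes K :=
  stmt10_general K
end

section
/- For every inconsistent finite knowledge base K, the distribution index is at most the minimum hitting-set size of its MUSes: μ_D(K) ≤ δ_hs(K), where δ_hs(K) is the minimum cardinality of a hitting set of MUSes(K). -/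
/-- The minimum cardinality of a hitting set of the MUSes of `K`. -/
noncomputable def deltaHS {V : Type} [DecidableEq V] (K : Finset (PropForm V)) : ℕ :=
  sInf {n : ℕ | ∃ H : Finset (PropForm V),
    H ⊆ K ∧ (∀ M ∈ MUSes K, (H ∩ M).Nonempty) ∧ H.card = n}

/-! Each component of a partial MUS-decomposition is inconsistent, so it contains a MUS of `K`,
which a hitting set meets; the components being pairwise disjoint, a hitting set has at least as
many elements as there are components. -/

theorem Finset.card_le_card_of_pairwiseDisjoint_of_inter_nonempty {ι α : Type*} [DecidableEq α]
    {T : Finset ι} {f : ι → Finset α} {H : Finset α}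
    (hT : (T : Set ι).PairwiseDisjoint f) (hH : ∀ i ∈ T, (H ∩ f i).Nonempty) :
    T.card ≤ H.card :=
  calc T.card = ∑ _ ∈ T, 1 := Finset.card_eq_sum_ones T
    _ ≤ ∑ i ∈ T, (H ∩ f i).card :=
        Finset.sum_le_sum fun i hi => Finset.one_le_card.mpr (hH i hi)
    _ = (T.biUnion fun i => H ∩ f i).card :=
        (Finset.card_biUnion fun _ hi _ hj hij =>
          (hT hi hj hij).mono Finset.inter_subset_right Finset.inter_subset_right).symm
    _ ≤ H.card :=
        Finset.card_le_card (Finset.biUnion_subset.mpr fun _ _ => Finset.inter_subset_left)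

theorem IsMUS.nonempty {V : Type} {M : Finset (PropForm V)} (h : IsMUS M) : M.Nonempty :=
  Finset.nonempty_iff_ne_empty.mpr fun hM => h.1 ⟨fun _ => true, by simp [hM]⟩

theorem exists_isMUS_subset_of_not_sat {V : Type} (K : Finset (PropForm V)) (hK : ¬ Sat K) :
    ∃ M ⊆ K, IsMUS M := by
  induction K using Finset.strongInduction with
  | H K ih =>
    by_cases hmin : ∀ M ⊂ K, Sat M
    · exact ⟨K, subset_rfl, hK, hmin⟩
    · push Not at hmin
      obtain ⟨K', hK'K, hK'⟩ := hmin
      obtain ⟨M, hMK', hM⟩ := ih K' hK'K hK'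
      exact ⟨M, hMK'.trans hK'K.subset, hM⟩

theorem exists_hittingSet_card_eq_deltaHS {V : Type} [DecidableEq V] (K : Finset (PropForm V)) :
    ∃ H ⊆ K, (∀ M ∈ MUSes K, (H ∩ M).Nonempty) ∧ H.card = deltaHS K := by
  have hK : ∀ M ∈ MUSes K, (K ∩ M).Nonempty := fun M ⟨hMK, hM⟩ => by
    rw [Finset.inter_eq_right.mpr hMK]
    exact hM.nonempty
  exact Nat.sInf_mem (s := {n | ∃ H : Finset (PropForm V),
    H ⊆ K ∧ (∀ M ∈ MUSes K, (H ∩ M).Nonempty) ∧ H.card = n}) ⟨K.card, K, subset_rfl, hK, rfl⟩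

theorem IsPartialMUSdecomp.card_le_of_hits {V : Type} [DecidableEq V]
    {K : Finset (PropForm V)} {T : Finset (Finset (PropForm V))} (hT : IsPartialMUSdecomp K T)
    {H : Finset (PropForm V)} (hH : ∀ M ∈ MUSes K, (H ∩ M).Nonempty) : T.card ≤ H.card := by
  refine Finset.card_le_card_of_pairwiseDisjoint_of_inter_nonempty hT.2.1 fun Ki hKi => ?_
  obtain ⟨hKiK, hKi⟩ := hT.1 Ki hKi
  obtain ⟨M, hMKi, hM⟩ := exists_isMUS_subset_of_not_sat Ki hKi
  exact (hH M ⟨hMKi.trans hKiK, hM⟩).mono (Finset.inter_subset_inter_left hMKi)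

theorem stmt16_general {V : Type} [DecidableEq V] (K : Finset (PropForm V)) :
    muD K ≤ deltaHS K := by
  obtain ⟨H, -, hH, hcard⟩ := exists_hittingSet_card_eq_deltaHS K
  rw [← hcard]
  refine csSup_le' ?_
  rintro n ⟨T, hT, rfl⟩
  exact hT.card_le_of_hits hH

theorem stmt16 {V : Type} [DecidableEq V] (K : Finset (PropForm V)) (hK : ¬ Sat K) :
    muD K ≤ deltaHS K :=
  stmt16_general K
end
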